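/- arXiv:2409.05788 — 2 statements merged into one kernel-verified Lean document; each statement's English description precedes it below -/
import Mathlib

section
/- Let n, k be positive integers and let y : Fin k → ℕ satisfy ∑_{r} y_r = n. Then, as an identity of polynomials in one variable q (equivalently, for every element q of a commutative ring), (∑_{w word with content y} q^{inv(w)}) · ∏_{r=1}^{k} ∏_{j=1}^{y_r} (1 − q^j) = ∏_{j=1}^{n} (1 − q^j). In other words, the generating polynomial ∑_{i ≥ 0} inv(y; i) q^i for words with content y counted by number of inversions equals the Gaussian (q-)multinomial coefficient [n; y_1, …, y_k]_q. -/
/-- The number of inversions of a word `w : Fin n → Fin k`: pairs of positions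
`s < t` with `w s > w t`. -/
def inversions {n k : ℕ} (w : Fin n → Fin k) : ℕ :=
  (Finset.univ.filter (fun st : Fin n × Fin n => st.1 < st.2 ∧ w st.2 < w st.1)).card

/-- The content of a word `w : Fin n → Fin k`: `content w r` is the number of
positions `t` with `w t = r`. -/
def content {n k : ℕ} (w : Fin n → Fin k) : Fin k → ℕ :=
  fun r => (Finset.univ.filter (fun t => w t = r)).card

/-!
Sort the words of length `n + 1` and content `y` by their last letter `r`. Deleting it leaves a
word of content `y - eᵣ` and removes exactly the `y_{>r} = ∑_{s > r} y_s` inversions formed by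
`r` with the larger letters in front of it, so the generating polynomial satisfies
`G(y) = ∑_{y_r > 0} q^{y_{>r}} G(y - eᵣ)`. Multiplying by `∏_s (q)_{y_s}` and using the
induction hypothesis for each `y - eᵣ` reduces the claim to the telescoping identity
`∑_r q^{y_{>r}} (1 - q^{y_r}) = 1 - q^{∑ y}`.
-/

open Finset

section SubSingle

variable {ι : Type*} [DecidableEq ι] {x y : ι → ℕ} {r : ι}

lemma single_le_of_pos (hr : 0 < y r) : Pi.single r 1 ≤ y := by
  intro s
  rcases eq_or_ne s r with rfl | hs
  · simpa [Nat.one_le_iff_ne_zero, Nat.pos_iff_ne_zero] using hr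
  · simp [hs]

lemma add_single_eq_iff_eq_sub_single (hr : 0 < y r) :
    x + Pi.single r 1 = y ↔ x = y - Pi.single r 1 :=
  (eq_tsub_iff_add_eq_of_le (single_le_of_pos hr)).symm

lemma sum_sub_single_of_pos [Fintype ι] (hr : 0 < y r) :
    ∑ s, (y - Pi.single r 1 : ι → ℕ) s = ∑ s, y s - 1 := by
  simp only [Pi.sub_apply]
  rw [sum_tsub_distrib _ fun s _ => single_le_of_pos hr s, sum_pi_single']
  simp

end SubSingle

section Words

variable {n k : ℕ}

lemma content_snoc (w : Fin n → Fin k) (r : Fin k) :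
    content (Fin.snoc w r : Fin (n + 1) → Fin k) = content w + Pi.single r 1 := by
  funext s
  simp only [content, card_filter, Fin.sum_univ_castSucc, Fin.snoc_castSucc, Fin.snoc_last,
    Pi.add_apply, Pi.single_apply, eq_comm]

lemma inversions_snoc (w : Fin n → Fin k) (r : Fin k) :
    inversions (Fin.snoc w r : Fin (n + 1) → Fin k) =
      inversions w + ∑ s ∈ Ioi r, content w s := by
  simp only [content]
  rw [sum_card_fiberwise_eq_card_filter]
  simp only [inversions, card_filter, Fintype.sum_prod_type, Fin.sum_univ_castSucc,
    Fin.snoc_castSucc, Fin.snoc_last, Fin.castSucc_lt_castSucc_iff, Fin.castSucc_lt_last,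
    (Fin.castSucc_lt_last _).not_gt, lt_irrefl, true_and, false_and, if_false, add_zero,
    sum_const_zero, sum_add_distrib, mem_Ioi]

lemma sum_filter_content_eq_sum_snoc {M : Type*} [AddCommMonoid M] (y : Fin k → ℕ)
    (f : (Fin (n + 1) → Fin k) → M) :
    ∑ w with content w = y, f w =
      ∑ r, ∑ w : Fin n → Fin k with content w + Pi.single r 1 = y, f (Fin.snoc w r) := by
  rw [sum_filter, ← (Fin.snocEquiv _).sum_comp, Fintype.sum_prod_type]
  simp only [Fin.snocEquiv, Equiv.coe_fn_mk, content_snoc, sum_filter]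

end Words

section invGenPoly

variable {R : Type*} [Semiring R]

def invGenPoly (q : R) (n : ℕ) {k : ℕ} (y : Fin k → ℕ) : R :=
  ∑ w : Fin n → Fin k with content w = y, q ^ inversions w

lemma invGenPoly_succ (q : R) (n : ℕ) {k : ℕ} (y : Fin k → ℕ) :
    invGenPoly q (n + 1) y =
      ∑ r with 0 < y r, invGenPoly q n (y - Pi.single r 1) * q ^ (∑ s ∈ Ioi r, y s) := by
  rw [invGenPoly, sum_filter_content_eq_sum_snoc, sum_filter]
  refine sum_congr rfl fun r _ => ?_
  split_ifs with hr
  · simp only [add_single_eq_iff_eq_sub_single hr, invGenPoly, sum_mul]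
    refine sum_congr rfl fun w hw => ?_
    rw [inversions_snoc, pow_add]
    congr 2
    refine sum_congr rfl fun s hs => ?_
    rw [(mem_filter.1 hw).2, Pi.sub_apply, Pi.single_eq_of_ne (mem_Ioi.1 hs).ne', tsub_zero]
  · refine sum_eq_zero fun w hw => absurd (congrFun (mem_filter.1 hw).2 r) ?_
    simp_all

end invGenPoly

section qPochhammer

variable {R : Type*} [CommRing R] (q : R)

/-- The `q`-Pochhammer symbol `(q; q)ₘ`, written `(q)ₘ` in the statement. -/
def qPochhammer (m : ℕ) : R :=
  ∏ j ∈ Icc 1 m, (1 - q ^ j)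

lemma qPochhammer_succ (m : ℕ) :
    qPochhammer q (m + 1) = qPochhammer q m * (1 - q ^ (m + 1)) :=
  prod_Icc_succ_top (by omega) _

lemma prod_qPochhammer_eq_mul_sub_single {k : ℕ} {y : Fin k → ℕ} {r : Fin k} (hr : 0 < y r) :
    ∏ s, qPochhammer q (y s) =
      (∏ s, qPochhammer q ((y - Pi.single r 1 : Fin k → ℕ) s)) * (1 - q ^ y r) := by
  have h_compl : ∀ s ∈ ({r}ᶜ : Finset (Fin k)),
      qPochhammer q ((y - Pi.single r 1 : Fin k → ℕ) s) = qPochhammer q (y s) := fun s hs => by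
    rw [Pi.sub_apply, Pi.single_eq_of_ne (by simpa using hs), tsub_zero]
  obtain ⟨m, hm⟩ := Nat.exists_eq_add_of_lt hr
  rw [Fintype.prod_eq_mul_prod_compl r, Fintype.prod_eq_mul_prod_compl r, prod_congr rfl h_compl,
    Pi.sub_apply, Pi.single_eq_same, hm, zero_add, add_tsub_cancel_right, qPochhammer_succ]
  ring

lemma sum_pow_sum_Ioi_mul_one_sub_pow :
    ∀ {k : ℕ} (y : Fin k → ℕ),
      ∑ r, q ^ (∑ s ∈ Ioi r, y s) * (1 - q ^ y r) = 1 - q ^ ∑ r, y r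
  | 0, _ => by simp
  | k + 1, y => by
    rw [Fin.sum_univ_succ, Fin.sum_univ_succ, Fin.sum_Ioi_zero]
    simp only [Fin.sum_Ioi_succ]
    rw [sum_pow_sum_Ioi_mul_one_sub_pow fun i => y i.succ, pow_add]
    ring

theorem invGenPoly_mul_prod_qPochhammer {k : ℕ} (n : ℕ) (y : Fin k → ℕ)
    (hy : ∑ r, y r = n) :
    invGenPoly q n y * ∏ r, qPochhammer q (y r) = qPochhammer q n := by
  induction n generalizing y with
  | zero =>
    obtain rfl : y = 0 := funext fun r => sum_eq_zero_iff.1 hy r (mem_univ r)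
    have h_content (w : Fin 0 → Fin k) : content w = 0 := funext fun r => by simp [content]
    simp [invGenPoly, inversions, qPochhammer, h_content]
  | succ n ih =>
    calc invGenPoly q (n + 1) y * ∏ r, qPochhammer q (y r)
        = ∑ r with 0 < y r, qPochhammer q n * (q ^ (∑ s ∈ Ioi r, y s) * (1 - q ^ y r)) := by
          rw [invGenPoly_succ, sum_mul]
          refine sum_congr rfl fun r hr => ?_
          have hr := (mem_filter.1 hr).2
          have hy' : ∑ s, (y - Pi.single r 1 : Fin k → ℕ) s = n := by
            rw [sum_sub_single_of_pos hr, hy, add_tsub_cancel_right]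
          rw [prod_qPochhammer_eq_mul_sub_single q hr, ← ih _ hy']
          ring
      _ = qPochhammer q n * ∑ r, q ^ (∑ s ∈ Ioi r, y s) * (1 - q ^ y r) := by
          rw [mul_sum, sum_filter_of_ne]
          intro r _ hr
          contrapose! hr
          simp [Nat.le_zero.1 hr]
      _ = qPochhammer q (n + 1) := by
          rw [sum_pow_sum_Ioi_mul_one_sub_pow, hy, qPochhammer_succ]

end qPochhammer

theorem inv_gen_poly_eq_q_multinomial_general (n k : ℕ)
    (y : Fin k → ℕ) (hy : ∑ r, y r = n)
    (R : Type*) [CommRing R] (q : R) :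
    (∑ w ∈ Finset.univ.filter (fun w : Fin n → Fin k => content w = y),
        q ^ inversions w) *
      ∏ r : Fin k, ∏ j ∈ Finset.Icc 1 (y r), (1 - q ^ j) =
    ∏ j ∈ Finset.Icc 1 n, (1 - q ^ j) :=
  invGenPoly_mul_prod_qPochhammer q n y hy

/-- The inversion generating polynomial for words with content `y` equals the
Gaussian multinomial coefficient `[n; y_1, …, y_k]_q`, as an identity of
polynomials, i.e. for every element `q` of any commutative ring:
`(∑_{w : content w = y} q^{inv w}) ⋅ ∏_r ∏_{j=1}^{y_r} (1 - q^j) = ∏_{j=1}^n (1 - q^j)`. -/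
theorem inv_gen_poly_eq_q_multinomial (n k : ℕ) (hn : 0 < n) (hk : 0 < k)
    (y : Fin k → ℕ) (hy : ∑ r, y r = n)
    (R : Type*) [CommRing R] (q : R) :
    (∑ w ∈ Finset.univ.filter (fun w : Fin n → Fin k => content w = y),
        q ^ inversions w) *
      ∏ r : Fin k, ∏ j ∈ Finset.Icc 1 (y r), (1 - q ^ j) =
    ∏ j ∈ Finset.Icc 1 n, (1 - q ^ j) :=
  inv_gen_poly_eq_q_multinomial_general n k y hy R q
end

section
/- Let k be a positive integer and let y : Fin k → ℕ be fixed nonnegative integers with n = ∑_r y_r. Then ∑_{i ≥ 0} i · inv(y_1, …, y_k; i) = (1/2) · (n! / (y_1! y_2! ⋯ y_k!)) · ∑_{1 ≤ r < s ≤ k} y_r y_s. Equivalently, the sum of inv(w) over all words w with content y equals (1/2) times the multinomial coefficient times ∑_{r<s} y_r y_s. -/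
/-- `invCount n k y i` is the number of words `w : Fin n → Fin k` with content `y`
and exactly `i` inversions. -/
def invCount (n k : ℕ) (y : Fin k → ℕ) (i : ℕ) : ℕ :=
  (Finset.univ.filter
    (fun w : Fin n → Fin k => content w = y ∧ inversions w = i)).card

/-! Two positions carrying distinct letters form either an inversion or a coinversion of `w`, so
`inversions w + coinversions w = ∑_{r<s} y_r y_s` for every word `w` of content `y`. Reversing a
word preserves its content and exchanges inversions with coinversions, so over the
`multinomial y` words of content `y` both statistics have the same total, which is therefore half
of `multinomial y * ∑_{r<s} y_r y_s`. -/

open Finset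
open scoped Nat

def coinversions {n k : ℕ} (w : Fin n → Fin k) : ℕ :=
  #{st : Fin n × Fin n | st.1 < st.2 ∧ w st.1 < w st.2}

lemma sum_range_mul_card_filter {ι R : Type*} [NonAssocSemiring R] (s : Finset ι) (f : ι → ℕ)
    (N : ℕ) (hf : ∀ x ∈ s, f x ≤ N) :
    ∑ i ∈ range (N + 1), (i : R) * #{x ∈ s | f x = i} = ∑ x ∈ s, (f x : R) := by
  rw [← sum_fiberwise_of_maps_to (g := f) (t := range (N + 1))
    fun x hx => mem_range.mpr (Nat.lt_succ_of_le (hf x hx))]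
  refine sum_congr rfl fun i _ => ?_
  rw [sum_congr rfl fun x hx => congrArg Nat.cast (mem_filter.mp hx).2, sum_const, nsmul_eq_mul]
  exact Nat.cast_comm i _

section Words

variable {n k : ℕ}

lemma content_comp_perm (w : Fin n → Fin k) (σ : Equiv.Perm (Fin n)) :
    content (w ∘ σ) = content w := by
  funext r
  exact card_equiv σ (by simp)

lemma card_lt_pairs_eq_sum_content (w : Fin n → Fin k) :
    #{st : Fin n × Fin n | w st.1 < w st.2} =
      ∑ rs ∈ univ.filter (fun rs : Fin k × Fin k => rs.1 < rs.2),
        content w rs.1 * content w rs.2 := by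
  rw [card_eq_sum_card_fiberwise (f := Prod.map w w)
    (t := univ.filter (fun rs : Fin k × Fin k => rs.1 < rs.2)) (by simp [Set.MapsTo])]
  refine sum_congr rfl fun rs hrs => ?_
  rw [content, content, ← card_product, ← filter_product, univ_product_univ, filter_filter]
  congr 1
  ext ⟨s, t⟩
  simp only [mem_filter, mem_univ, true_and] at hrs ⊢
  simp only [Prod.map, Prod.ext_iff]
  constructor
  · exact fun h => h.2
  · rintro ⟨hs, ht⟩
    exact ⟨hs ▸ ht ▸ hrs, hs, ht⟩

lemma card_lt_pairs_eq_inversions_add_coinversions (w : Fin n → Fin k) :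
    #{st : Fin n × Fin n | w st.1 < w st.2} = inversions w + coinversions w := by
  rw [← card_filter_add_card_filter_not (fun st : Fin n × Fin n => st.1 < st.2),
    filter_filter, filter_filter, add_comm, coinversions]
  congr 1
  · refine card_equiv (Equiv.prodComm _ _) fun ⟨s, t⟩ => ?_
    simp only [mem_filter, mem_univ, true_and, Equiv.prodComm_apply, Prod.fst_swap,
      Prod.snd_swap, not_lt]
    exact ⟨fun h => ⟨h.2.lt_of_ne fun hts => (hts ▸ h.1).false, h.1⟩,
      fun h => ⟨h.2, h.1.le⟩⟩
  · simp only [and_comm]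

lemma inversions_add_coinversions (w : Fin n → Fin k) :
    inversions w + coinversions w =
      ∑ rs ∈ univ.filter (fun rs : Fin k × Fin k => rs.1 < rs.2),
        content w rs.1 * content w rs.2 := by
  rw [← card_lt_pairs_eq_inversions_add_coinversions, card_lt_pairs_eq_sum_content]

lemma inversions_comp_rev (w : Fin n → Fin k) :
    inversions (w ∘ Fin.rev) = coinversions w :=
  card_equiv ((Equiv.prodComm _ _).trans (Fin.revPerm.prodCongr Fin.revPerm)) (by simp)

theorem two_mul_sum_inversions (y : Fin k → ℕ) :
    2 * ∑ w ∈ univ.filter (fun w : Fin n → Fin k => content w = y), inversions w =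
      #{w : Fin n → Fin k | content w = y} *
        ∑ rs ∈ univ.filter (fun rs : Fin k × Fin k => rs.1 < rs.2), y rs.1 * y rs.2 := by
  set W := univ.filter (fun w : Fin n → Fin k => content w = y)
  have reverse : Function.Involutive fun w : Fin n → Fin k => w ∘ Fin.rev :=
    fun w => by ext; simp
  have sum_coinversions_eq : ∑ w ∈ W, coinversions w = ∑ w ∈ W, inversions w :=
    sum_equiv reverse.toPerm
      (fun w => by
        simp [W, show content (w ∘ Fin.rev) = content w from content_comp_perm w Fin.revPerm])
      (fun w _ => (inversions_comp_rev w).symm)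
  calc 2 * ∑ w ∈ W, inversions w
      = ∑ w ∈ W, (inversions w + coinversions w) := by
        rw [sum_add_distrib, sum_coinversions_eq, two_mul]
    _ = #W * ∑ rs ∈ univ.filter (fun rs : Fin k × Fin k => rs.1 < rs.2), y rs.1 * y rs.2 := by
        rw [← smul_eq_mul, ← sum_const]
        refine sum_congr rfl fun w hw => ?_
        rw [inversions_add_coinversions, (mem_filter.mp hw).2]

lemma exists_content_eq (y : Fin k → ℕ) (hn : n = ∑ r, y r) :
    ∃ w : Fin n → Fin k, content w = y := by
  subst hn
  refine ⟨fun t => (finSigmaFinEquiv.symm t).1, funext fun r => ?_⟩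
  rw [content, card_equiv finSigmaFinEquiv.symm (t := univ.filter fun p => p.1 = r) (by simp)]
  rw [card_filter, Fintype.sum_sigma]
  simp [apply_ite card]

lemma exists_perm_comp_eq {w w' : Fin n → Fin k} (h : content w = content w') :
    ∃ σ : Equiv.Perm (Fin n), w' ∘ σ = w := by
  have fiber_card (r : Fin k) : Fintype.card {t // w t = r} = Fintype.card {t // w' t = r} := by
    simpa only [Fintype.card_subtype, content] using congrFun h r
  let e (r : Fin k) := Fintype.equivOfCardEq (fiber_card r)
  exact ⟨(Equiv.sigmaFiberEquiv w).symm.trans ((Equiv.sigmaCongrRight e).trans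
    (Equiv.sigmaFiberEquiv w')), funext fun t => (e (w t) ⟨t, rfl⟩).prop⟩

lemma card_perm_comp_eq {w₀ w : Fin n → Fin k} (h : content w = content w₀) :
    #{σ : Equiv.Perm (Fin n) | w₀ ∘ σ = w} = ∏ r, (content w₀ r)! := by
  obtain ⟨τ, rfl⟩ := exists_perm_comp_eq h
  rw [card_equiv (Equiv.mulRight τ⁻¹)
      (t := univ.filter fun σ : Equiv.Perm (Fin n) => w₀ ∘ σ = w₀) fun σ => by
      simp [Equiv.Perm.coe_mul, Equiv.Perm.inv_def, ← Function.comp_assoc, Equiv.comp_symm_eq],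
    ← Fintype.card_subtype, DomMulAct.stabilizer_card]
  simp only [content, Fintype.card_subtype]

theorem card_content_eq_multinomial (y : Fin k → ℕ) (hn : n = ∑ r, y r) :
    #{w : Fin n → Fin k | content w = y} = Nat.multinomial univ y := by
  obtain ⟨w₀, rfl⟩ := exists_content_eq y hn
  have orbit_stabilizer :
      #{w : Fin n → Fin k | content w = content w₀} * ∏ r, (content w₀ r)! =
        Fintype.card (Equiv.Perm (Fin n)) := by
    rw [← card_univ,
      card_eq_sum_card_fiberwise (f := fun σ : Equiv.Perm (Fin n) => w₀ ∘ σ)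
        (t := univ.filter fun w => content w = content w₀)
        fun σ _ => by simp [content_comp_perm],
      sum_congr rfl fun w hw => card_perm_comp_eq (mem_filter.mp hw).2, sum_const, smul_eq_mul]
  refine Nat.eq_of_mul_eq_mul_right
    (prod_pos (s := univ) fun r _ => (content w₀ r).factorial_pos) ?_
  rw [orbit_stabilizer, Fintype.card_perm, Fintype.card_fin, mul_comm, Nat.multinomial_spec, ← hn]

end Words

theorem sum_i_mul_invCount_general (k : ℕ) (y : Fin k → ℕ) (n : ℕ)
    (hn : n = ∑ r, y r) :
    ∑ i ∈ Finset.range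
        ((∑ rs ∈ Finset.univ.filter (fun rs : Fin k × Fin k => rs.1 < rs.2),
          y rs.1 * y rs.2) + 1),
      (i : ℚ) * invCount n k y i =
    (1 / 2 : ℚ) * (Nat.multinomial Finset.univ y : ℚ) *
      ∑ rs ∈ Finset.univ.filter (fun rs : Fin k × Fin k => rs.1 < rs.2),
        (y rs.1 : ℚ) * y rs.2 := by
  set W := univ.filter (fun w : Fin n → Fin k => content w = y)
  have inversions_le : ∀ w ∈ W, inversions w ≤
      ∑ rs ∈ univ.filter (fun rs : Fin k × Fin k => rs.1 < rs.2), y rs.1 * y rs.2 :=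
    fun w hw => (mem_filter.mp hw).2 ▸ inversions_add_coinversions w ▸ Nat.le_add_right _ _
  have invCount_eq (i : ℕ) : invCount n k y i = #{w ∈ W | inversions w = i} :=
    congrArg card (filter_filter _ _ _).symm
  have two_mul_sum := two_mul_sum_inversions (n := n) y
  rw [card_content_eq_multinomial y hn] at two_mul_sum
  simp only [invCount_eq]
  rw [sum_range_mul_card_filter W inversions _ inversions_le]
  qify at two_mul_sum
  linarith

/-- First moment of the inversion statistic over words with content `y`:
`∑_{i ≥ 0} i ⋅ inv(y; i) = (1/2) ⋅ (n!/(y_1!⋯y_k!)) ⋅ ∑_{1 ≤ r < s ≤ k} y_r y_s`. -/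
theorem sum_i_mul_invCount (k : ℕ) (hk : 0 < k) (y : Fin k → ℕ) (n : ℕ)
    (hn : n = ∑ r, y r) :
    ∑ i ∈ Finset.range
        ((∑ rs ∈ Finset.univ.filter (fun rs : Fin k × Fin k => rs.1 < rs.2),
          y rs.1 * y rs.2) + 1),
      (i : ℚ) * invCount n k y i =
    (1 / 2 : ℚ) * (Nat.multinomial Finset.univ y : ℚ) *
      ∑ rs ∈ Finset.univ.filter (fun rs : Fin k × Fin k => rs.1 < rs.2),
        (y rs.1 : ℚ) * y rs.2 :=
  sum_i_mul_invCount_general k y n hn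
end
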